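/- Let r > 0 and S₊ := { v ∈ ℝ^{p+q} : ⟨v,v⟩ = r² and v^p + v^{p+1} > 0 }. For every x ∈ S₊, the AN-orbit of x equals S₊; in other words, S₊ is a single AN-orbit. -/

import Mathlib

open Matrix

noncomputable section

/-- 1-based standard basis vector `e i` of `ℝ^n` (zero if `i` is out of range). -/
def stdE (n i : ℕ) : Fin n → ℝ := fun j => if (j : ℕ) + 1 = i then 1 else 0

/-- `w i := e_{p-i+1} - e_{p+i}`. -/
def wVec (p q i : ℕ) : Fin (p + q) → ℝ := stdE (p + q) (p - i + 1) - stdE (p + q) (p + i)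

/-- `v i := e_{p-i+1} + e_{p+i}`. -/
def vVec (p q i : ℕ) : Fin (p + q) → ℝ := stdE (p + q) (p - i + 1) + stdE (p + q) (p + i)

/-- The scalar product of signature `(p,q)` on `ℝ^{p+q}`. -/
def ip (p q : ℕ) (x y : Fin (p + q) → ℝ) : ℝ :=
  ∑ i : Fin (p + q), (if (i : ℕ) < p then (1 : ℝ) else -1) * x i * y i

/-- The matrix `J = diag(I_p, -I_q)`. -/
def Jmat (p q : ℕ) : Matrix (Fin (p + q)) (Fin (p + q)) ℝ :=
  Matrix.diagonal (fun i => if (i : ℕ) < p then (1 : ℝ) else -1)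

/-- Entry of a square matrix, with 1-based indices (0 outside the range). -/
def ent {n : ℕ} (X : Matrix (Fin n) (Fin n) ℝ) (i j : ℕ) : ℝ :=
  if h : i - 1 < n ∧ j - 1 < n then X ⟨i - 1, h.1⟩ ⟨j - 1, h.2⟩ else 0

/-- Coordinate of a vector, with 1-based index (0 outside the range). -/
def vent {n : ℕ} (x : Fin n → ℝ) (i : ℕ) : ℝ :=
  if h : i - 1 < n then x ⟨i - 1, h⟩ else 0

lemma ent_zero {n : ℕ} (i j : ℕ) : ent (0 : Matrix (Fin n) (Fin n) ℝ) i j = 0 := by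
  unfold ent; split <;> simp

lemma ent_add {n : ℕ} (X Y : Matrix (Fin n) (Fin n) ℝ) (i j : ℕ) :
    ent (X + Y) i j = ent X i j + ent Y i j := by
  unfold ent; split <;> simp [Matrix.add_apply]

lemma ent_smul {n : ℕ} (c : ℝ) (X : Matrix (Fin n) (Fin n) ℝ) (i j : ℕ) :
    ent (c • X) i j = c * ent X i j := by
  unfold ent; split <;> simp [Matrix.smul_apply]

/-- The Lie algebra `𝔰𝔬(p,q)`, as a set of matrices. -/
def soSet (p q : ℕ) : Set (Matrix (Fin (p + q)) (Fin (p + q)) ℝ) :=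
  {X | Xᵀ * Jmat p q + Jmat p q * X = 0}

lemma soSet_zero (p q : ℕ) : (0 : Matrix (Fin (p + q)) (Fin (p + q)) ℝ) ∈ soSet p q := by
  simp [soSet]

lemma soSet_add (p q : ℕ) {X Y : Matrix (Fin (p + q)) (Fin (p + q)) ℝ}
    (hX : X ∈ soSet p q) (hY : Y ∈ soSet p q) : X + Y ∈ soSet p q := by
  simp only [soSet, Set.mem_setOf_eq] at *
  rw [Matrix.transpose_add, Matrix.add_mul, Matrix.mul_add,
    show Xᵀ * Jmat p q + Yᵀ * Jmat p q + (Jmat p q * X + Jmat p q * Y)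
      = (Xᵀ * Jmat p q + Jmat p q * X) + (Yᵀ * Jmat p q + Jmat p q * Y) by abel,
    hX, hY, add_zero]

lemma soSet_smul (p q : ℕ) (c : ℝ) {X : Matrix (Fin (p + q)) (Fin (p + q)) ℝ}
    (hX : X ∈ soSet p q) : c • X ∈ soSet p q := by
  simp only [soSet, Set.mem_setOf_eq] at *
  rw [Matrix.transpose_smul, Matrix.smul_mul, Matrix.mul_smul, ← smul_add, hX, smul_zero]

/-- The set `𝔭` of symmetric elements of `𝔰𝔬(p,q)` (Cartan decomposition). -/
def pSet (p q : ℕ) : Set (Matrix (Fin (p + q)) (Fin (p + q)) ℝ) :=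
  {X | X ∈ soSet p q ∧ Xᵀ = X}

/-- The nilpotent Iwasawa factor `𝔫`, as a set of matrices; the conditions are the
entry conditions on the blocks `A`, `B`, `D` (1-based indices; `A i j = ent X i j`,
`B i l = ent X i (p + l)`, `D i j = ent X (p + i) (p + j)`). -/
def nSet (p q : ℕ) : Set (Matrix (Fin (p + q)) (Fin (p + q)) ℝ) :=
  {X | X ∈ soSet p q ∧
    (∀ i j, 1 ≤ i → i ≤ p - q → 1 ≤ j → j ≤ p - q → ent X i j = 0) ∧
    (∀ l, 1 ≤ l → l ≤ q → ent X (p - l + 1) (p + l) = 0) ∧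
    (∀ k l, 1 ≤ k → k ≤ p - q → 1 ≤ l → l ≤ q →
      ent X k (p - l + 1) = ent X k (p + l)) ∧
    (∀ i j, 1 ≤ i → i < j → j ≤ q →
      ent X (p + 1 - j) (p + 1 - i) = ent X (p + 1 - j) (p + i)) ∧
    (∀ i j, 1 ≤ i → i < j → j ≤ q →
      ent X (p + i) (p + j) = - ent X (p + 1 - i) (p + j))}

/-- The abelian factor `𝔞`, as a set of matrices: all entries vanish except the
pairs in positions `(p-l+1, p+l)` and `(p+l, p-l+1)`, `1 ≤ l ≤ q`, which are equal. -/
def aSet (p q : ℕ) : Set (Matrix (Fin (p + q)) (Fin (p + q)) ℝ) :=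
  {X | (∀ l, 1 ≤ l → l ≤ q → ent X (p - l + 1) (p + l) = ent X (p + l) (p - l + 1)) ∧
    (∀ i j, 1 ≤ i → i ≤ p + q → 1 ≤ j → j ≤ p + q →
      (¬ ∃ l, 1 ≤ l ∧ l ≤ q ∧ ((i = p - l + 1 ∧ j = p + l) ∨ (i = p + l ∧ j = p - l + 1))) →
      ent X i j = 0)}

/-- `𝔨₀`: skew-symmetric upper-left `(p-q)×(p-q)` block, all other entries zero. -/
def kSet (p q : ℕ) : Set (Matrix (Fin (p + q)) (Fin (p + q)) ℝ) :=
  {X | (∀ i j, 1 ≤ i → i ≤ p - q → 1 ≤ j → j ≤ p - q → ent X i j = - ent X j i) ∧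
    (∀ i j, 1 ≤ i → i ≤ p + q → 1 ≤ j → j ≤ p + q →
      ¬(i ≤ p - q ∧ j ≤ p - q) → ent X i j = 0)}

/-- The nilpotent Iwasawa factor `𝔫` as an `ℝ`-subspace of `M_{p+q}(ℝ)`. -/
def nSub (p q : ℕ) : Submodule ℝ (Matrix (Fin (p + q)) (Fin (p + q)) ℝ) where
  carrier := nSet p q
  zero_mem' := by
    refine ⟨soSet_zero p q, ?_, ?_, ?_, ?_, ?_⟩ <;> intros <;> simp [ent_zero]
  add_mem' := by
    rintro X Y ⟨h0, h1, h2, h3, h4, h5⟩ ⟨g0, g1, g2, g3, g4, g5⟩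
    refine ⟨soSet_add p q h0 g0, ?_, ?_, ?_, ?_, ?_⟩
    · intro i j hi hi' hj hj'
      rw [ent_add, h1 i j hi hi' hj hj', g1 i j hi hi' hj hj', add_zero]
    · intro l hl hl'
      rw [ent_add, h2 l hl hl', g2 l hl hl', add_zero]
    · intro k l hk hk' hl hl'
      rw [ent_add, ent_add, h3 k l hk hk' hl hl', g3 k l hk hk' hl hl']
    · intro i j hi hij hj
      rw [ent_add, ent_add, h4 i j hi hij hj, g4 i j hi hij hj]
    · intro i j hi hij hj
      rw [ent_add, ent_add, h5 i j hi hij hj, g5 i j hi hij hj]; ring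
  smul_mem' := by
    rintro c X ⟨h0, h1, h2, h3, h4, h5⟩
    refine ⟨soSet_smul p q c h0, ?_, ?_, ?_, ?_, ?_⟩
    · intro i j hi hi' hj hj'
      rw [ent_smul, h1 i j hi hi' hj hj', mul_zero]
    · intro l hl hl'
      rw [ent_smul, h2 l hl hl', mul_zero]
    · intro k l hk hk' hl hl'
      rw [ent_smul, ent_smul, h3 k l hk hk' hl hl']
    · intro i j hi hij hj
      rw [ent_smul, ent_smul, h4 i j hi hij hj]
    · intro i j hi hij hj
      rw [ent_smul, ent_smul, h5 i j hi hij hj]; ring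

/-- The abelian factor `𝔞` as an `ℝ`-subspace of `M_{p+q}(ℝ)`. -/
def aSub (p q : ℕ) : Submodule ℝ (Matrix (Fin (p + q)) (Fin (p + q)) ℝ) where
  carrier := aSet p q
  zero_mem' := by
    refine ⟨?_, ?_⟩ <;> intros <;> simp [ent_zero]
  add_mem' := by
    rintro X Y ⟨h1, h2⟩ ⟨g1, g2⟩
    refine ⟨?_, ?_⟩
    · intro l hl hl'
      rw [ent_add, ent_add, h1 l hl hl', g1 l hl hl']
    · intro i j hi hi' hj hj' hne
      rw [ent_add, h2 i j hi hi' hj hj' hne, g2 i j hi hi' hj hj' hne, add_zero]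
  smul_mem' := by
    rintro c X ⟨h1, h2⟩
    refine ⟨?_, ?_⟩
    · intro l hl hl'
      rw [ent_smul, ent_smul, h1 l hl hl']
    · intro i j hi hi' hj hj' hne
      rw [ent_smul, h2 i j hi hi' hj hj' hne, mul_zero]

/-- `𝔨₀` as an `ℝ`-subspace of `M_{p+q}(ℝ)`. -/
def kSub (p q : ℕ) : Submodule ℝ (Matrix (Fin (p + q)) (Fin (p + q)) ℝ) where
  carrier := kSet p q
  zero_mem' := by
    refine ⟨?_, ?_⟩ <;> intros <;> simp [ent_zero]
  add_mem' := by
    rintro X Y ⟨h1, h2⟩ ⟨g1, g2⟩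
    refine ⟨?_, ?_⟩
    · intro i j hi hi' hj hj'
      rw [ent_add, ent_add, h1 i j hi hi' hj hj', g1 i j hi hi' hj hj']; ring
    · intro i j hi hi' hj hj' hne
      rw [ent_add, h2 i j hi hi' hj hj' hne, g2 i j hi hi' hj hj' hne, add_zero]
  smul_mem' := by
    rintro c X ⟨h1, h2⟩
    refine ⟨?_, ?_⟩
    · intro i j hi hi' hj hj'
      rw [ent_smul, ent_smul, h1 i j hi hi' hj hj']; ring
    · intro i j hi hi' hj hj' hne
      rw [ent_smul, h2 i j hi hi' hj hj' hne, mul_zero]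

/-- The subspace `{X ∈ M_n(ℝ) : X x = 0}`. -/
def kerAt {n : ℕ} (x : Fin n → ℝ) : Submodule ℝ (Matrix (Fin n) (Fin n) ℝ) where
  carrier := {X | X *ᵥ x = 0}
  zero_mem' := by simp [Matrix.zero_mulVec]
  add_mem' := by
    intro X Y hX hY
    simp only [Set.mem_setOf_eq] at *
    rw [Matrix.add_mulVec, hX, hY, add_zero]
  smul_mem' := by
    intro c X hX
    simp only [Set.mem_setOf_eq] at *
    rw [Matrix.smul_mulVec, hX, smul_zero]

/-- The exponential of a matrix, as a unit of `M_n(ℝ)`, i.e. an element of `GL(n, ℝ)`. -/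
def expUnit {n : ℕ} (X : Matrix (Fin n) (Fin n) ℝ) : (Matrix (Fin n) (Fin n) ℝ)ˣ where
  val := NormedSpace.exp X
  inv := NormedSpace.exp (-X)
  val_inv := by
    rw [← Matrix.exp_add_of_commute X (-X) (Commute.neg_right (Commute.refl X)),
      add_neg_cancel, NormedSpace.exp_zero]
  inv_val := by
    rw [← Matrix.exp_add_of_commute (-X) X (Commute.neg_left (Commute.refl X)),
      neg_add_cancel, NormedSpace.exp_zero]

/-- The subgroup `N = exp(𝔫)` of `GL(p+q, ℝ)` generated by exponentials of elements of `𝔫`. -/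
def Ngrp (p q : ℕ) : Subgroup (Matrix (Fin (p + q)) (Fin (p + q)) ℝ)ˣ :=
  Subgroup.closure {g | ∃ X ∈ nSet p q, g = expUnit X}

/-- The subgroup `AN` of `GL(p+q, ℝ)` generated by exponentials of elements of `𝔞 ∪ 𝔫`. -/
def ANgrp (p q : ℕ) : Subgroup (Matrix (Fin (p + q)) (Fin (p + q)) ℝ)ˣ :=
  Subgroup.closure {g | ∃ X ∈ aSet p q ∪ nSet p q, g = expUnit X}

/-- The subgroup `Q = K₀AN` of `GL(p+q, ℝ)` generated by exponentials of `𝔨₀ ∪ 𝔞 ∪ 𝔫`. -/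
def Qgrp (p q : ℕ) : Subgroup (Matrix (Fin (p + q)) (Fin (p + q)) ℝ)ˣ :=
  Subgroup.closure {g | ∃ X ∈ kSet p q ∪ aSet p q ∪ nSet p q, g = expUnit X}

/-- The orbit `G(x)` of a point `x ∈ ℝ^n` under a subgroup `G` of `GL(n, ℝ)`. -/
def orb {n : ℕ} (G : Subgroup (Matrix (Fin n) (Fin n) ℝ)ˣ) (x : Fin n → ℝ) :
    Set (Fin n → ℝ) :=
  {v | ∃ g ∈ G, (g : Matrix (Fin n) (Fin n) ℝ) *ᵥ x = v}

end

/-!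
Write `a ∧ b` for the `J`-skew map `y ↦ ⟨b, y⟩ a - ⟨a, y⟩ b` (`Matrix.wedge`) and
`w₁ = e_p - e_{p+1}`, a null vector with `⟨w₁, v⟩ = v^p + v^{p+1}`.

Every `X ∈ 𝔞 ∪ 𝔫` is skew for the form and has `w₁` as an eigenvector, so `exp X` preserves
`⟨v, v⟩` and multiplies `⟨w₁, v⟩` by a positive number: `AN` maps `S₊` into itself.

Conversely, write `u ∈ S₊` as `α e_p + β e_{p+1} + z` with `z ⊥ e_p, e_{p+1}`. Since `w₁` and
`z` are orthogonal and `w₁` is null, the exponential series of the null rotation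
`exp (r⁻¹ z ∧ w₁) ∈ N` applied to `r e_p` stops after three terms: it gives `r e_p + z + c w₁`
for some `c`. The boost `exp (t e_{p+1} ∧ e_p) ∈ A` fixes `z` and scales `e_p + e_{p+1}` by `eᵗ`
and `w₁` by `e⁻ᵗ`; with `eᵗ = (α + β) / r` it reaches `u`, the value of `c` being forced by
`⟨u, u⟩ = r²`.
Hence `S₊` is the orbit of `r e_p`.
-/

namespace Matrix

open scoped Nat

variable {ι : Type*} [Fintype ι]

section Exp

variable [DecidableEq ι]

theorem exp_mulVec_eq_tsum (M : Matrix ι ι ℝ) (u : ι → ℝ) :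
    NormedSpace.exp M *ᵥ u = ∑' k : ℕ, (k ! : ℝ)⁻¹ • (M ^ k *ᵥ u) := by
  -- any normed algebra structure inducing the product topology makes the series summable
  let _ : NormedRing (Matrix ι ι ℝ) := Matrix.linftyOpNormedRing
  let _ : NormedAlgebra ℝ (Matrix ι ι ℝ) := Matrix.linftyOpNormedAlgebra
  let evalAt : Matrix ι ι ℝ →L[ℝ] ι → ℝ :=
    (LinearMap.applyₗ u ∘ₗ toLin'.toLinearMap).toContinuousLinearMap
  change evalAt (NormedSpace.exp M) = _
  rw [NormedSpace.exp_eq_tsum ℝ, evalAt.map_tsum (NormedSpace.expSeries_summable' M)]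
  exact tsum_congr fun k => smul_mulVec _ _ _

theorem exp_mulVec_of_mulVec_eq_smul {M : Matrix ι ι ℝ} {u : ι → ℝ} {c : ℝ}
    (h : M *ᵥ u = c • u) : NormedSpace.exp M *ᵥ u = Real.exp c • u := by
  have hpow (k : ℕ) : M ^ k *ᵥ u = c ^ k • u := by
    induction k with
    | zero => simp
    | succ k ih => rw [pow_succ', ← mulVec_mulVec, ih, mulVec_smul, h, smul_smul, ← pow_succ]
  have hsum : Summable fun k : ℕ => (k ! : ℝ)⁻¹ * c ^ k := by
    simpa using NormedSpace.expSeries_summable' (𝕂 := ℝ) c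
  simp_rw [exp_mulVec_eq_tsum, hpow, smul_smul]
  rw [hsum.tsum_smul_const, Real.exp_eq_exp_ℝ, NormedSpace.exp_eq_tsum ℝ]
  simp

theorem exp_mulVec_of_pow_mulVec_eq_zero {M : Matrix ι ι ℝ} {u : ι → ℝ} {n : ℕ}
    (h : M ^ n *ᵥ u = 0) :
    NormedSpace.exp M *ᵥ u = ∑ k ∈ Finset.range n, (k ! : ℝ)⁻¹ • (M ^ k *ᵥ u) := by
  rw [exp_mulVec_eq_tsum, tsum_eq_sum]
  intro k hk
  rw [← Nat.sub_add_cancel (not_lt.mp (Finset.mem_range.not.mp hk)), pow_add, ← mulVec_mulVec, h,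
    mulVec_zero, smul_zero]

theorem transpose_exp_mul_mul_exp {J X : Matrix ι ι ℝ} (hJ : J * J = 1)
    (hX : Xᵀ * J + J * X = 0) : (NormedSpace.exp X)ᵀ * J * NormedSpace.exp X = J := by
  have hJinv : J⁻¹ = J := inv_eq_right_inv hJ
  have hXt : Xᵀ = J * -X * J⁻¹ := calc
    Xᵀ = Xᵀ * J * J := by rw [mul_assoc, hJ, mul_one]
    _ = J * -X * J⁻¹ := by rw [eq_neg_of_add_eq_zero_left hX, hJinv]; noncomm_ring
  rw [← exp_transpose, hXt, exp_conj J (-X) ⟨⟨J, J, hJ, hJ⟩, rfl⟩, hJinv,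
    mul_assoc (J * _), hJ, mul_one, mul_assoc,
    ← exp_add_of_commute _ _ (Commute.neg_left (Commute.refl X)), neg_add_cancel,
    NormedSpace.exp_zero, mul_one]

theorem exp_mulVec_dotProduct_mulVec_exp_mulVec {J X : Matrix ι ι ℝ} (hJ : J * J = 1)
    (hX : Xᵀ * J + J * X = 0) (u v : ι → ℝ) :
    (NormedSpace.exp X *ᵥ u) ⬝ᵥ J *ᵥ (NormedSpace.exp X *ᵥ v) = u ⬝ᵥ J *ᵥ v := by
  conv_rhs => rw [← transpose_exp_mul_mul_exp hJ hX, ← mulVec_mulVec, ← mulVec_mulVec]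
  rw [dotProduct_mulVec u, vecMul_transpose]

end Exp

variable {J : Matrix ι ι ℝ}

theorem dotProduct_mulVec_comm (hJ : Jᵀ = J) (a b : ι → ℝ) : a ⬝ᵥ J *ᵥ b = b ⬝ᵥ J *ᵥ a := by
  rw [dotProduct_mulVec, ← mulVec_transpose, hJ, dotProduct_comm]

def wedge (J : Matrix ι ι ℝ) (a b : ι → ℝ) : Matrix ι ι ℝ :=
  vecMulVec a (b ᵥ* J) - vecMulVec b (a ᵥ* J)

theorem wedge_mulVec (a b y : ι → ℝ) :
    wedge J a b *ᵥ y = (b ⬝ᵥ J *ᵥ y) • a - (a ⬝ᵥ J *ᵥ y) • b := by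
  simp [wedge, sub_mulVec, vecMulVec_mulVec, dotProduct_mulVec]

theorem transpose_wedge_mul_add_mul_wedge (hJ : Jᵀ = J) (a b : ι → ℝ) :
    (wedge J a b)ᵀ * J + J * wedge J a b = 0 := by
  simp only [wedge, transpose_sub, transpose_vecMulVec, sub_mul, mul_sub, vecMulVec_mul,
    mul_vecMulVec, ← mulVec_transpose, hJ]
  abel

variable [DecidableEq ι]

theorem exp_wedge_mulVec_of_isotropic (hJ : Jᵀ = J) {w z y : ι → ℝ} (hww : w ⬝ᵥ J *ᵥ w = 0)
    (hzw : z ⬝ᵥ J *ᵥ w = 0) (hzy : z ⬝ᵥ J *ᵥ y = 0) :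
    NormedSpace.exp (wedge J z w) *ᵥ y =
      y + (w ⬝ᵥ J *ᵥ y) • z - ((w ⬝ᵥ J *ᵥ y) * (z ⬝ᵥ J *ᵥ z) / 2) • w := by
  have hwz : w ⬝ᵥ J *ᵥ z = 0 := by rw [dotProduct_mulVec_comm hJ, hzw]
  have h1 : wedge J z w *ᵥ y = (w ⬝ᵥ J *ᵥ y) • z := by simp [wedge_mulVec, hzy]
  have h2 : wedge J z w ^ 2 *ᵥ y = -((w ⬝ᵥ J *ᵥ y) * (z ⬝ᵥ J *ᵥ z)) • w := by
    simp [sq, ← mulVec_mulVec, h1, mulVec_smul, wedge_mulVec, hwz, smul_smul]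
  have h3 : wedge J z w ^ 3 *ᵥ y = 0 := by
    simp [pow_succ' _ 2, ← mulVec_mulVec, h2, wedge_mulVec, mulVec_neg, mulVec_smul, hww, hzw]
  rw [exp_mulVec_of_pow_mulVec_eq_zero h3]
  simp only [Finset.sum_range_succ, Finset.sum_range_zero, Nat.factorial_zero, Nat.factorial_one,
    Nat.factorial_two, pow_zero, pow_one, one_mulVec, h1, h2]
  module

theorem exp_wedge_mulVec_of_orthonormal (hJ : Jᵀ = J) {a b z : ι → ℝ} (haa : a ⬝ᵥ J *ᵥ a = -1)
    (hbb : b ⬝ᵥ J *ᵥ b = 1) (hab : a ⬝ᵥ J *ᵥ b = 0) (haz : a ⬝ᵥ J *ᵥ z = 0)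
    (hbz : b ⬝ᵥ J *ᵥ z = 0) (t c d : ℝ) :
    NormedSpace.exp (wedge J (t • a) b) *ᵥ (c • (b + a) + d • (b - a) + z) =
      (Real.exp t * c) • (b + a) + (Real.exp (-t) * d) • (b - a) + z := by
  have hba : b ⬝ᵥ J *ᵥ a = 0 := by rw [dotProduct_mulVec_comm hJ, hab]
  have hplus : wedge J (t • a) b *ᵥ (b + a) = t • (b + a) := by
    simp only [wedge_mulVec, mulVec_add, smul_dotProduct, smul_eq_mul, hbb, hba, hab, haa]
    module
  have hminus : wedge J (t • a) b *ᵥ (b - a) = (-t) • (b - a) := by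
    simp only [wedge_mulVec, mulVec_sub, smul_dotProduct, smul_eq_mul, hbb, hba, hab, haa]
    module
  have hz : wedge J (t • a) b *ᵥ z = (0 : ℝ) • z := by simp [wedge_mulVec, haz, hbz]
  simp only [mulVec_add, mulVec_smul, exp_mulVec_of_mulVec_eq_smul hplus,
    exp_mulVec_of_mulVec_eq_smul hminus, exp_mulVec_of_mulVec_eq_smul hz, Real.exp_zero, one_smul,
    smul_smul, mul_comm]

end Matrix

section Coordinates

variable {p q n : ℕ}

theorem ip_eq_dotProduct (x y : Fin (p + q) → ℝ) : ip p q x y = x ⬝ᵥ Jmat p q *ᵥ y := by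
  simp only [ip, Jmat, dotProduct, mulVec_diagonal]
  exact Finset.sum_congr rfl fun i _ => by ring

theorem Jmat_transpose : (Jmat p q)ᵀ = Jmat p q := diagonal_transpose _

theorem Jmat_mul_self : Jmat p q * Jmat p q = 1 := by
  rw [Jmat, diagonal_mul_diagonal, ← diagonal_one]
  congr 1
  ext i
  split_ifs <;> norm_num

theorem ip_comm (x y : Fin (p + q) → ℝ) : ip p q x y = ip p q y x := by
  rw [ip_eq_dotProduct, ip_eq_dotProduct, dotProduct_mulVec_comm Jmat_transpose]

theorem ip_sub_left (x y v : Fin (p + q) → ℝ) : ip p q (x - y) v = ip p q x v - ip p q y v := by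
  simp only [ip_eq_dotProduct, sub_dotProduct]

theorem ip_smul_left (c : ℝ) (x v : Fin (p + q) → ℝ) : ip p q (c • x) v = c * ip p q x v := by
  simp only [ip_eq_dotProduct, smul_dotProduct, smul_eq_mul]

theorem vent_sub (x y : Fin n → ℝ) (i : ℕ) : vent (x - y) i = vent x i - vent y i := by
  unfold vent; split <;> simp

theorem vent_smul (c : ℝ) (x : Fin n → ℝ) (i : ℕ) : vent (c • x) i = c * vent x i := by
  unfold vent; split <;> simp

theorem apply_eq_vent (x : Fin n → ℝ) (i : Fin n) : x i = vent x (i + 1) := by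
  simp [vent]

theorem vent_stdE {i : ℕ} (k : ℕ) (hi : 1 ≤ i) (hin : i ≤ n) :
    vent (stdE n k) i = if i = k then 1 else 0 := by
  simp only [vent, stdE, dif_pos (show i - 1 < n by omega), Nat.sub_add_cancel hi]

theorem stdE_eq_single {k : ℕ} (hk : 1 ≤ k) (hkn : k ≤ n) :
    stdE n k = Pi.single ⟨k - 1, by omega⟩ 1 := by
  ext j
  simp only [stdE, Pi.single_apply, Fin.ext_iff]
  congr 1
  apply propext
  omega

theorem ip_stdE_left {k : ℕ} (hk : 1 ≤ k) (hkn : k ≤ p + q) (v : Fin (p + q) → ℝ) :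
    ip p q (stdE (p + q) k) v = (if k ≤ p then 1 else -1) * vent v k := by
  rw [ip_eq_dotProduct, stdE_eq_single hk hkn, single_dotProduct, Jmat, mulVec_diagonal]
  simp [vent, dif_pos (show k - 1 < p + q by omega), show k - 1 < p ↔ k ≤ p by omega]

theorem mulVec_stdE_apply {k : ℕ} (hk : 1 ≤ k) (hkn : k ≤ n) (X : Matrix (Fin n) (Fin n) ℝ)
    (i : Fin n) : (X *ᵥ stdE n k) i = ent X (i + 1) k := by
  rw [stdE_eq_single hk hkn, mulVec_single_one]
  simp [ent, dif_pos (show k - 1 < n by omega)]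

theorem ent_wedge {I K : ℕ} (a b : Fin (p + q) → ℝ) (hI : 1 ≤ I) (hIn : I ≤ p + q) (hK : 1 ≤ K)
    (hKn : K ≤ p + q) :
    ent (wedge (Jmat p q) a b) I K =
      (vent a I * vent b K - vent b I * vent a K) * (if K ≤ p then 1 else -1) := by
  simp only [ent, vent, dif_pos (show I - 1 < p + q ∧ K - 1 < p + q by omega),
    dif_pos (show I - 1 < p + q by omega), dif_pos (show K - 1 < p + q by omega), wedge, Jmat,
    Matrix.sub_apply, vecMulVec_apply, vecMul_diagonal, show K - 1 < p ↔ K ≤ p by omega]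
  ring

theorem mem_soSet_iff {X : Matrix (Fin (p + q)) (Fin (p + q)) ℝ} :
    X ∈ soSet p q ↔ ∀ I K, 1 ≤ I → I ≤ p + q → 1 ≤ K → K ≤ p + q →
      ent X K I * (if K ≤ p then 1 else -1) + (if I ≤ p then 1 else -1) * ent X I K = 0 := by
  change Xᵀ * Jmat p q + Jmat p q * X = 0 ↔ _
  rw [← Matrix.ext_iff]
  simp only [Matrix.add_apply, Jmat, mul_diagonal, diagonal_mul, transpose_apply,
    Matrix.zero_apply]
  constructor
  · intro h I K hI hIn hK hKn
    simpa [ent, dif_pos (show I - 1 < p + q ∧ K - 1 < p + q by omega),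
      dif_pos (show K - 1 < p + q ∧ I - 1 < p + q by omega), show I - 1 < p ↔ I ≤ p by omega,
      show K - 1 < p ↔ K ≤ p by omega] using h ⟨I - 1, by omega⟩ ⟨K - 1, by omega⟩
  · intro h i j
    simpa [ent, Nat.add_one_le_iff] using
      h ((i : ℕ) + 1) ((j : ℕ) + 1) (by omega) (by omega) (by omega) (by omega)

end Coordinates

section Iwasawa

variable {p q : ℕ}

theorem wVec_one (hp : 1 ≤ p) : wVec p q 1 = stdE (p + q) p - stdE (p + q) (p + 1) := by
  rw [wVec, Nat.sub_add_cancel hp]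

theorem vent_wVec_one {I : ℕ} (hp : 1 ≤ p) (hI : 1 ≤ I) (hIn : I ≤ p + q) :
    vent (wVec p q 1) I = (if I = p then 1 else 0) - (if I = p + 1 then 1 else 0) := by
  rw [wVec_one hp, vent_sub, vent_stdE _ hI hIn, vent_stdE _ hI hIn]

theorem ip_wVec_one_left (hp : 1 ≤ p) (hq : 1 ≤ q) (v : Fin (p + q) → ℝ) :
    ip p q (wVec p q 1) v = vent v p + vent v (p + 1) := by
  rw [wVec_one hp, ip_sub_left, ip_stdE_left hp (by omega), ip_stdE_left (by omega) (by omega),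
    if_pos le_rfl, if_neg (by omega)]
  ring

theorem mulVec_wVec_one_eq_smul (hp : 1 ≤ p) (hq : 1 ≤ q)
    {X : Matrix (Fin (p + q)) (Fin (p + q)) ℝ} {μ : ℝ}
    (h : ∀ I, 1 ≤ I → I ≤ p + q → ent X I p - ent X I (p + 1) = μ * vent (wVec p q 1) I) :
    X *ᵥ wVec p q 1 = μ • wVec p q 1 := by
  ext i
  rw [Pi.smul_apply, smul_eq_mul, apply_eq_vent (wVec p q 1) i, ← h _ (by omega) (by omega),
    wVec_one hp, mulVec_sub, Pi.sub_apply, mulVec_stdE_apply hp (by omega),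
    mulVec_stdE_apply (by omega) (by omega)]

theorem wedge_mem_aSet (hq : 1 ≤ q) (hpq : q ≤ p) (t : ℝ) :
    wedge (Jmat p q) (t • stdE (p + q) (p + 1)) (stdE (p + q) p) ∈ aSet p q := by
  have hent : ∀ I K, 1 ≤ I → I ≤ p + q → 1 ≤ K → K ≤ p + q →
      ent (wedge (Jmat p q) (t • stdE (p + q) (p + 1)) (stdE (p + q) p)) I K =
        t * ((if I = p + 1 then 1 else 0) * (if K = p then 1 else 0) -
          (if I = p then 1 else 0) * (if K = p + 1 then 1 else 0)) * (if K ≤ p then 1 else -1) := by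
    intro I K hI hIn hK hKn
    rw [ent_wedge _ _ hI hIn hK hKn, vent_smul, vent_smul, vent_stdE _ hI hIn, vent_stdE _ hI hIn,
      vent_stdE _ hK hKn, vent_stdE _ hK hKn]
    ring
  refine ⟨fun l hl hlq => ?_, fun I K hI hIn hK hKn hns => ?_⟩
  · rw [hent _ _ (by omega) (by omega) (by omega) (by omega),
      hent _ _ (by omega) (by omega) (by omega) (by omega)]
    split_ifs <;> first | ring1 | omega
  · rw [hent I K hI hIn hK hKn]
    split_ifs <;> first | ring1 | exact absurd ⟨1, le_rfl, hq, by omega⟩ hns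

theorem wedge_mem_nSet (hq : 1 ≤ q) (hpq : q ≤ p) {z : Fin (p + q) → ℝ} (hz : vent z p = 0)
    (hz' : vent z (p + 1) = 0) : wedge (Jmat p q) z (wVec p q 1) ∈ nSet p q := by
  have hp : 1 ≤ p := hq.trans hpq
  have hent : ∀ I K, 1 ≤ I → I ≤ p + q → 1 ≤ K → K ≤ p + q →
      ent (wedge (Jmat p q) z (wVec p q 1)) I K =
        (vent z I * ((if K = p then 1 else 0) - (if K = p + 1 then 1 else 0)) -
          ((if I = p then 1 else 0) - (if I = p + 1 then 1 else 0)) * vent z K) *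
          (if K ≤ p then 1 else -1) := by
    intro I K hI hIn hK hKn
    rw [ent_wedge _ _ hI hIn hK hKn, vent_wVec_one hp hI hIn, vent_wVec_one hp hK hKn]
  refine ⟨transpose_wedge_mul_add_mul_wedge Jmat_transpose _ _, ?_, ?_, ?_, ?_, ?_⟩
  · intro I K hI hIq hK hKq
    rw [hent I K hI (by omega) hK (by omega)]
    split_ifs <;> first | ring1 | omega
  · intro l hl hlq
    rw [hent _ _ (by omega) (by omega) (by omega) (by omega)]
    obtain rfl | hl1 := eq_or_ne l 1
    · simp [Nat.sub_add_cancel hp, hz, hz']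
    · split_ifs <;> first | ring1 | omega
  · intro k l hk hkq hl hlq
    rw [hent _ _ hk (by omega) (by omega) (by omega), hent _ _ hk (by omega) (by omega) (by omega)]
    split_ifs <;> first | ring1 | omega
  · intro i j hi hij hjq
    rw [hent _ _ (by omega) (by omega) (by omega) (by omega),
      hent _ _ (by omega) (by omega) (by omega) (by omega)]
    split_ifs <;> first | ring1 | omega
  · intro i j hi hij hjq
    rw [hent _ _ (by omega) (by omega) (by omega) (by omega),
      hent _ _ (by omega) (by omega) (by omega) (by omega)]
    split_ifs <;> first | ring1 | omega

theorem mem_soSet_of_mem_aSet (hpq : q ≤ p) {X : Matrix (Fin (p + q)) (Fin (p + q)) ℝ}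
    (hX : X ∈ aSet p q) : X ∈ soSet p q := by
  obtain ⟨hsym, hvan⟩ := hX
  refine mem_soSet_iff.mpr fun I K hI hIn hK hKn => ?_
  by_cases hs : ∃ l, 1 ≤ l ∧ l ≤ q ∧ ((I = p - l + 1 ∧ K = p + l) ∨ (I = p + l ∧ K = p - l + 1))
  · obtain ⟨l, hl, hlq, ⟨rfl, rfl⟩ | ⟨rfl, rfl⟩⟩ := hs
    · rw [hsym l hl hlq, if_neg (by omega), if_pos (by omega)]
      ring
    · rw [hsym l hl hlq, if_pos (by omega), if_neg (by omega)]
      ring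
  · have hs' : ¬∃ l, 1 ≤ l ∧ l ≤ q ∧ ((K = p - l + 1 ∧ I = p + l) ∨ (K = p + l ∧ I = p - l + 1)) :=
      fun ⟨l, hl, hlq, h⟩ => hs ⟨l, hl, hlq, h.symm.imp And.symm And.symm⟩
    rw [hvan I K hI hIn hK hKn hs, hvan K I hK hKn hI hIn hs']
    ring

theorem mulVec_wVec_one_of_mem_aSet (hq : 1 ≤ q) (hpq : q ≤ p)
    {X : Matrix (Fin (p + q)) (Fin (p + q)) ℝ} (hX : X ∈ aSet p q) :
    X *ᵥ wVec p q 1 = (-ent X p (p + 1)) • wVec p q 1 := by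
  have hp : 1 ≤ p := hq.trans hpq
  obtain ⟨hsym, hvan⟩ := hX
  have hvan' : ∀ I K, 1 ≤ I → I ≤ p + q → (K = p ∨ K = p + 1) →
      ¬(I = p ∧ K = p + 1) → ¬(I = p + 1 ∧ K = p) → ent X I K = 0 :=
    fun I K hI hIn hK h1 h2 => hvan I K hI hIn (by omega) (by omega) <| by
      rintro ⟨l, hl, hlq, ⟨h3, h4⟩ | ⟨h3, h4⟩⟩ <;> omega
  have hsym1 : ent X (p + 1) p = ent X p (p + 1) := by
    simpa [Nat.sub_add_cancel hp] using (hsym 1 le_rfl hq).symm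
  refine mulVec_wVec_one_eq_smul hp hq fun I hI hIn => ?_
  rw [vent_wVec_one hp hI hIn]
  obtain hIp | hIp | ⟨h1, h2⟩ : I = p ∨ I = p + 1 ∨ (I ≠ p ∧ I ≠ p + 1) := by omega
  · rw [hIp, hvan' p p hp (by omega) (by omega) (by omega) (by omega)]
    simp
  · rw [hIp, hvan' (p + 1) (p + 1) (by omega) (by omega) (by omega) (by omega) (by omega), hsym1]
    simp
  · rw [hvan' I p hI hIn (by omega) (by omega) (by omega),
      hvan' I (p + 1) hI hIn (by omega) (by omega) (by omega), if_neg h1, if_neg h2]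
    ring

theorem mulVec_wVec_one_of_mem_nSet (hq : 1 ≤ q) (hpq : q ≤ p)
    {X : Matrix (Fin (p + q)) (Fin (p + q)) ℝ} (hX : X ∈ nSet p q) :
    X *ᵥ wVec p q 1 = 0 := by
  have hp : 1 ≤ p := hq.trans hpq
  obtain ⟨hso, -, hB, hAB, hAB', hDB⟩ := hX
  have hso := mem_soSet_iff.mp hso
  rw [← zero_smul ℝ (wVec p q 1)]
  refine mulVec_wVec_one_eq_smul hp hq fun I hI hIn => ?_
  rw [zero_mul, sub_eq_zero]
  have hpp1 : ent X p (p + 1) = 0 := by simpa [Nat.sub_add_cancel hp] using hB 1 le_rfl hq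
  -- For `I < p` the two entries are `A_{I,p}` and `B_{I,1}`, equal by the relations defining `𝔫`;
  -- for `I = p` both vanish; for `I > p` skewness turns them into `B_{p,I-p}` and `-D_{1,I-p}`,
  -- equal since `D = -B` in the first row of `D`.
  rcases lt_trichotomy I p with hIp | hIp | hIp
  · by_cases hIq : I ≤ p - q
    · simpa [Nat.sub_add_cancel hp] using hAB I 1 hI hIq le_rfl hq
    · simpa [show p + 1 - (p + 1 - I) = I by omega] using
        hAB' 1 (p + 1 - I) le_rfl (by omega) (by omega)
  · have hpp := hso p p hp (by omega) hp (by omega)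
    rw [if_pos le_rfl] at hpp
    rw [hIp, hpp1]
    linarith
  · have h1 := hso I p hI hIn hp (by omega)
    have h2 := hso I (p + 1) hI hIn (by omega) (by omega)
    rw [if_pos le_rfl, if_neg (by omega)] at h1
    rw [if_neg (by omega), if_neg (by omega)] at h2
    obtain rfl | hI1 := eq_or_ne I (p + 1)
    · linarith
    · have h3 := hDB 1 (I - p) le_rfl (by omega) (by omega)
      rw [show p + (I - p) = I by omega, Nat.add_sub_cancel] at h3
      linarith

theorem mem_soSet_and_exists_mulVec_wVec_one_eq_smul (hq : 1 ≤ q) (hpq : q ≤ p)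
    {X : Matrix (Fin (p + q)) (Fin (p + q)) ℝ} (hX : X ∈ aSet p q ∪ nSet p q) :
    X ∈ soSet p q ∧ ∃ μ : ℝ, X *ᵥ wVec p q 1 = μ • wVec p q 1 := by
  rcases hX with hX | hX
  · exact ⟨mem_soSet_of_mem_aSet hpq hX, _, mulVec_wVec_one_of_mem_aSet hq hpq hX⟩
  · exact ⟨hX.1, 0, by rw [zero_smul, mulVec_wVec_one_of_mem_nSet hq hpq hX]⟩

end Iwasawa

section Orbit

variable {p q : ℕ} {r : ℝ}

theorem ip_stdE_self_left (hp : 1 ≤ p) (v : Fin (p + q) → ℝ) :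
    ip p q (stdE (p + q) p) v = vent v p := by
  rw [ip_stdE_left hp (by omega), if_pos le_rfl, one_mul]

theorem ip_stdE_succ_left (hq : 1 ≤ q) (v : Fin (p + q) → ℝ) :
    ip p q (stdE (p + q) (p + 1)) v = -vent v (p + 1) := by
  rw [ip_stdE_left (by omega) (by omega), if_neg (by omega), neg_one_mul]

theorem vent_stdE_self_succ (hp : 1 ≤ p) (hq : 1 ≤ q) :
    vent (stdE (p + q) p) p = 1 ∧ vent (stdE (p + q) p) (p + 1) = 0 ∧
      vent (stdE (p + q) (p + 1)) p = 0 ∧ vent (stdE (p + q) (p + 1)) (p + 1) = 1 := by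
  simp [vent_stdE _ hp (show p ≤ p + q by omega),
    vent_stdE _ (show 1 ≤ p + 1 by omega) (show p + 1 ≤ p + q by omega)]

theorem exp_wedge_wVec_one_mulVec_stdE (hq : 1 ≤ q) (hpq : q ≤ p) {z : Fin (p + q) → ℝ}
    (hz : vent z p = 0) (hz' : vent z (p + 1) = 0) :
    NormedSpace.exp (wedge (Jmat p q) z (wVec p q 1)) *ᵥ stdE (p + q) p =
      stdE (p + q) p + z - (ip p q z z / 2) • wVec p q 1 := by
  have hp : 1 ≤ p := hq.trans hpq
  obtain ⟨he_p, he_p1, -, -⟩ := vent_stdE_self_succ hp hq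
  have h := exp_wedge_mulVec_of_isotropic Jmat_transpose (w := wVec p q 1) (z := z)
    (y := stdE (p + q) p)
    (by simp [← ip_eq_dotProduct, ip_wVec_one_left hp hq, vent_wVec_one hp (q := q) hp,
      vent_wVec_one hp (q := q) (show 1 ≤ p + 1 by omega) (show p + 1 ≤ p + q by omega)])
    (by rw [← ip_eq_dotProduct, ip_comm, ip_wVec_one_left hp hq, hz, hz', add_zero])
    (by rw [← ip_eq_dotProduct, ip_comm, ip_stdE_self_left hp, hz])
  rwa [← ip_eq_dotProduct, ← ip_eq_dotProduct, ip_wVec_one_left hp hq, he_p, he_p1, add_zero,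
    one_smul, one_mul] at h

theorem exp_wedge_stdE_mulVec (hq : 1 ≤ q) (hpq : q ≤ p) {z : Fin (p + q) → ℝ}
    (hz : vent z p = 0) (hz' : vent z (p + 1) = 0) (t c d : ℝ) :
    NormedSpace.exp (wedge (Jmat p q) (t • stdE (p + q) (p + 1)) (stdE (p + q) p)) *ᵥ
        (c • (stdE (p + q) p + stdE (p + q) (p + 1)) +
          d • (stdE (p + q) p - stdE (p + q) (p + 1)) + z) =
      (Real.exp t * c) • (stdE (p + q) p + stdE (p + q) (p + 1)) +
        (Real.exp (-t) * d) • (stdE (p + q) p - stdE (p + q) (p + 1)) + z := by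
  have hp : 1 ≤ p := hq.trans hpq
  obtain ⟨he_p, he_p1, -, he'_p1⟩ := vent_stdE_self_succ hp hq
  exact exp_wedge_mulVec_of_orthonormal Jmat_transpose
    (by rw [← ip_eq_dotProduct, ip_stdE_succ_left hq, he'_p1])
    (by rw [← ip_eq_dotProduct, ip_stdE_self_left hp, he_p])
    (by rw [← ip_eq_dotProduct, ip_stdE_succ_left hq, he_p1, neg_zero])
    (by rw [← ip_eq_dotProduct, ip_stdE_succ_left hq, hz', neg_zero])
    (by rw [← ip_eq_dotProduct, ip_stdE_self_left hp, hz]) t c d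

def posPseudosphere (p q : ℕ) (r : ℝ) : Set (Fin (p + q) → ℝ) :=
  {v | ip p q v v = r ^ 2 ∧ 0 < vent v p + vent v (p + 1)}

theorem ip_exp_mulVec_exp_mulVec {X : Matrix (Fin (p + q)) (Fin (p + q)) ℝ} (hX : X ∈ soSet p q)
    (u v : Fin (p + q) → ℝ) :
    ip p q (NormedSpace.exp X *ᵥ u) (NormedSpace.exp X *ᵥ v) = ip p q u v := by
  simp only [ip_eq_dotProduct]
  exact exp_mulVec_dotProduct_mulVec_exp_mulVec Jmat_mul_self hX u v

theorem exp_mulVec_mem_posPseudosphere (hq : 1 ≤ q) (hpq : q ≤ p)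
    {X : Matrix (Fin (p + q)) (Fin (p + q)) ℝ} (hX : X ∈ aSet p q ∪ nSet p q)
    {v : Fin (p + q) → ℝ} (hv : v ∈ posPseudosphere p q r) :
    NormedSpace.exp X *ᵥ v ∈ posPseudosphere p q r := by
  have hp : 1 ≤ p := hq.trans hpq
  obtain ⟨hso, μ, hμ⟩ := mem_soSet_and_exists_mulVec_wVec_one_eq_smul hq hpq hX
  have hw : Real.exp μ * ip p q (wVec p q 1) (NormedSpace.exp X *ᵥ v) = ip p q (wVec p q 1) v := by
    rw [← ip_smul_left, ← exp_mulVec_of_mulVec_eq_smul hμ, ip_exp_mulVec_exp_mulVec hso]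
  rw [ip_wVec_one_left hp hq, ip_wVec_one_left hp hq] at hw
  exact ⟨(ip_exp_mulVec_exp_mulVec hso v v).trans hv.1,
    pos_of_mul_pos_right (hw ▸ hv.2) (Real.exp_pos μ).le⟩

theorem mulVec_mem_posPseudosphere_of_mem_ANgrp (hq : 1 ≤ q) (hpq : q ≤ p)
    {g : (Matrix (Fin (p + q)) (Fin (p + q)) ℝ)ˣ} (hg : g ∈ ANgrp p q)
    {v : Fin (p + q) → ℝ} (hv : v ∈ posPseudosphere p q r) :
    (g : Matrix (Fin (p + q)) (Fin (p + q)) ℝ) *ᵥ v ∈ posPseudosphere p q r := by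
  induction hg using Subgroup.closure_induction'' generalizing v with
  | mem g hg =>
    obtain ⟨X, hX, rfl⟩ := hg
    exact exp_mulVec_mem_posPseudosphere hq hpq hX hv
  | inv_mem g hg =>
    obtain ⟨X, hX, rfl⟩ := hg
    exact exp_mulVec_mem_posPseudosphere hq hpq (hX.imp (aSub p q).neg_mem (nSub p q).neg_mem) hv
  | one => simpa using hv
  | mul g h _ _ ihg ihh =>
    rw [Units.val_mul, ← mulVec_mulVec]
    exact ihg (ihh hv)

theorem expUnit_mem_ANgrp {X : Matrix (Fin (p + q)) (Fin (p + q)) ℝ}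
    (hX : X ∈ aSet p q ∪ nSet p q) : expUnit X ∈ ANgrp p q :=
  Subgroup.subset_closure ⟨X, hX, rfl⟩

def perpPart (p q : ℕ) (u : Fin (p + q) → ℝ) : Fin (p + q) → ℝ :=
  u - vent u p • stdE (p + q) p - vent u (p + 1) • stdE (p + q) (p + 1)

theorem vent_perpPart (hp : 1 ≤ p) (hq : 1 ≤ q) (u : Fin (p + q) → ℝ) :
    vent (perpPart p q u) p = 0 ∧ vent (perpPart p q u) (p + 1) = 0 := by
  obtain ⟨he_p, he_p1, he'_p, he'_p1⟩ := vent_stdE_self_succ hp hq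
  simp [perpPart, vent_sub, vent_smul, he_p, he_p1, he'_p, he'_p1]

theorem ip_perpPart_self (hp : 1 ≤ p) (hq : 1 ≤ q) (u : Fin (p + q) → ℝ) :
    ip p q (perpPart p q u) (perpPart p q u) = ip p q u u - vent u p ^ 2 + vent u (p + 1) ^ 2 := by
  obtain ⟨hz, hz'⟩ := vent_perpPart hp hq u
  set z := perpPart p q u
  calc ip p q z z
      = ip p q (u - vent u p • stdE (p + q) p - vent u (p + 1) • stdE (p + q) (p + 1)) z := rfl
    _ = ip p q u z - vent u p * ip p q (stdE (p + q) p) z -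
          vent u (p + 1) * ip p q (stdE (p + q) (p + 1)) z := by
        rw [ip_sub_left, ip_sub_left, ip_smul_left, ip_smul_left]
    _ = ip p q z u := by rw [ip_stdE_self_left hp, ip_stdE_succ_left hq, hz, hz', ip_comm]; ring
    _ = ip p q (u - vent u p • stdE (p + q) p - vent u (p + 1) • stdE (p + q) (p + 1)) u := rfl
    _ = ip p q u u - vent u p ^ 2 + vent u (p + 1) ^ 2 := by
      rw [ip_sub_left, ip_sub_left, ip_smul_left, ip_smul_left, ip_stdE_self_left hp,
        ip_stdE_succ_left hq]
      ring

theorem exists_mem_ANgrp_mulVec_stdE_eq (hq : 1 ≤ q) (hpq : q ≤ p) (hr : 0 < r)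
    {u : Fin (p + q) → ℝ} (hu : u ∈ posPseudosphere p q r) :
    ∃ g ∈ ANgrp p q, (g : Matrix (Fin (p + q)) (Fin (p + q)) ℝ) *ᵥ (r • stdE (p + q) p) = u := by
  have hp : 1 ≤ p := hq.trans hpq
  have hzz := ip_perpPart_self hp hq u
  have hu_eq : u = vent u p • stdE (p + q) p + vent u (p + 1) • stdE (p + q) (p + 1) +
      perpPart p q u := by
    rw [perpPart]; abel
  obtain ⟨hz, hz'⟩ := vent_perpPart hp hq u
  have hrz : vent (r⁻¹ • perpPart p q u) p = 0 ∧ vent (r⁻¹ • perpPart p q u) (p + 1) = 0 := by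
    simp [vent_smul, hz, hz']
  set z := perpPart p q u
  set e := stdE (p + q) p
  set e' := stdE (p + q) (p + 1)
  set α := vent u p
  set β := vent u (p + 1)
  have hαβ : 0 < α + β := hu.2
  set t := Real.log ((α + β) / r)
  refine ⟨expUnit (wedge (Jmat p q) (t • e') e) * expUnit (wedge (Jmat p q) (r⁻¹ • z) (wVec p q 1)),
    mul_mem (expUnit_mem_ANgrp (Or.inl (wedge_mem_aSet hq hpq t)))
      (expUnit_mem_ANgrp (Or.inr (wedge_mem_nSet hq hpq hrz.1 hrz.2))), ?_⟩
  have hdecomp : r • (e + r⁻¹ • z - (ip p q (r⁻¹ • z) (r⁻¹ • z) / 2) • wVec p q 1) =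
      (r / 2) • (e + e') + ((r - r⁻¹ * ip p q z z) / 2) • (e - e') + z := by
    rw [wVec_one hp, ip_smul_left, ip_comm, ip_smul_left]
    match_scalars <;> field_simp <;> ring1
  rw [Units.val_mul, ← mulVec_mulVec]
  change NormedSpace.exp (wedge (Jmat p q) (t • e') e) *ᵥ
    NormedSpace.exp (wedge (Jmat p q) (r⁻¹ • z) (wVec p q 1)) *ᵥ (r • e) = u
  rw [mulVec_smul, exp_wedge_wVec_one_mulVec_stdE hq hpq hrz.1 hrz.2, hdecomp,
    exp_wedge_stdE_mulVec hq hpq hz hz', Real.exp_neg, Real.exp_log (div_pos hαβ hr), hzz, hu.1]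
  conv_rhs => rw [hu_eq]
  match_scalars <;> field_simp <;> ring1

end Orbit

/-- For `r > 0`, `S₊ := {v : ⟨v,v⟩ = r², v^p + v^{p+1} > 0}` is a single
`AN`-orbit: for every `x ∈ S₊`, `AN(x) = S₊`. -/
theorem ANgrp_orbit_sphere (p q : ℕ) (hq : 1 ≤ q) (hpq : q ≤ p) (r : ℝ) (hr : 0 < r)
    (x : Fin (p + q) → ℝ)
    (hx0 : ip p q x x = r ^ 2) (hx1 : 0 < vent x p + vent x (p + 1)) :
    orb (ANgrp p q) x = {v | ip p q v v = r ^ 2 ∧ 0 < vent v p + vent v (p + 1)} := by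
  change orb (ANgrp p q) x = posPseudosphere p q r
  obtain ⟨g, hg, rfl⟩ := exists_mem_ANgrp_mulVec_stdE_eq hq hpq hr ⟨hx0, hx1⟩
  ext v
  refine ⟨?_, fun hv => ?_⟩
  · rintro ⟨h, hh, rfl⟩
    exact mulVec_mem_posPseudosphere_of_mem_ANgrp hq hpq hh ⟨hx0, hx1⟩
  · obtain ⟨g', hg', rfl⟩ := exists_mem_ANgrp_mulVec_stdE_eq hq hpq hr hv
    refine ⟨g' * g⁻¹, mul_mem hg' (inv_mem hg), ?_⟩
    rw [mulVec_mulVec, ← Units.val_mul, mul_assoc, inv_mul_cancel, mul_one]
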